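/- arXiv:math/9201302 — 3 statements merged into one kernel-verified Lean document; each statement's English description precedes it below -/
import Mathlib

section
/- In the field ℚ(q) of rational functions in one variable q over ℚ, the G₂ coefficients a = q⁵ + q⁴ + q + 1 + q⁻¹ + q⁻⁴ + q⁻⁵, b = −(q³ + q² + q + q⁻¹ + q⁻² + q⁻³), c = q² + 1 + q⁻², d₁ = −(q + q⁻¹), d₂ = q + 1 + q⁻¹, e₁ = 1, e₂ = −1 satisfy all eleven consistency equations: (1) b² = b·d₁ + d₂ + a·d₂; (2) c² = b·d₁ + c·d₁ + d₂; (3) b·c = 2·e₁·b + 2·e₂ + a·e₂ + e₁·c; (4) c·d₁ = d₁·e₁ + c·e₁ + b·e₁ + e₂; (5) c·d₂ = d₂·e₁ + b·e₂; (6) d₁·e₁ + d₂ = e₁²; (7) d₁·e₁ + d₁² = e₁² + c·e₁ + d₁·e₁; (8) d₁·e₁ = e₁² + d₁·e₁ + e₂; (9) d₁·e₂ + d₂·c = e₁·e₂ + b·e₂ + 2·d₂·e₁; (10) d₁·e₂ = e₁·e₂ + d₂·e₁; (11) d₁·e₂ + d₁·d₂ = e₁·e₂ + e₂·c. -/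
/-! Each consistency equation becomes, after substituting the coefficients, an identity of
Laurent polynomials in `q`; it therefore holds for every nonzero `q` in any field, in particular
for the indeterminate of `ℚ(q)`. -/

/-- The system of eleven scalar equations in the coefficients of the reduction rules for a loop
(`a`), a bigon (`b`), a triangle (`c`), a square (`d₁`, `d₂`) and a pentagon (`e₁`, `e₂`). -/
def G2ConsistencyEquations {K : Type*} [CommRing K] (a b c d₁ d₂ e₁ e₂ : K) : Prop :=
  b ^ 2 = b * d₁ + d₂ + a * d₂ ∧
  c ^ 2 = b * d₁ + c * d₁ + d₂ ∧
  b * c = 2 * e₁ * b + 2 * e₂ + a * e₂ + e₁ * c ∧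
  c * d₁ = d₁ * e₁ + c * e₁ + b * e₁ + e₂ ∧
  c * d₂ = d₂ * e₁ + b * e₂ ∧
  d₁ * e₁ + d₂ = e₁ ^ 2 ∧
  d₁ * e₁ + d₁ ^ 2 = e₁ ^ 2 + c * e₁ + d₁ * e₁ ∧
  d₁ * e₁ = e₁ ^ 2 + d₁ * e₁ + e₂ ∧
  d₁ * e₂ + d₂ * c = e₁ * e₂ + b * e₂ + 2 * d₂ * e₁ ∧
  d₁ * e₂ = e₁ * e₂ + d₂ * e₁ ∧
  d₁ * e₂ + d₁ * d₂ = e₁ * e₂ + e₂ * c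

theorem g2ConsistencyEquations_of_ne_zero {K : Type*} [Field K] {q : K} (hq : q ≠ 0) :
    G2ConsistencyEquations
      (q ^ 5 + q ^ 4 + q + 1 + q⁻¹ + (q ^ 4)⁻¹ + (q ^ 5)⁻¹)
      (-(q ^ 3 + q ^ 2 + q + q⁻¹ + (q ^ 2)⁻¹ + (q ^ 3)⁻¹))
      (q ^ 2 + 1 + (q ^ 2)⁻¹) (-(q + q⁻¹)) (q + 1 + q⁻¹) 1 (-1) := by
  refine ⟨?_, ?_, ?_, ?_, ?_, ?_, ?_, ?_, ?_, ?_, ?_⟩ <;> field_simp <;> ring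

/-- The explicit G₂ coefficients in `ℚ(q)` satisfy all eleven consistency
equations forced by the 1,0,1,1,4,10 Ansatz. -/
theorem g2_coefficients_satisfy_consistency
    (q a b c d₁ d₂ e₁ e₂ : RatFunc ℚ)
    (hq : q = RatFunc.X)
    (ha : a = q ^ 5 + q ^ 4 + q + 1 + q⁻¹ + (q ^ 4)⁻¹ + (q ^ 5)⁻¹)
    (hb : b = -(q ^ 3 + q ^ 2 + q + q⁻¹ + (q ^ 2)⁻¹ + (q ^ 3)⁻¹))
    (hc : c = q ^ 2 + 1 + (q ^ 2)⁻¹)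
    (hd₁ : d₁ = -(q + q⁻¹))
    (hd₂ : d₂ = q + 1 + q⁻¹)
    (he₁ : e₁ = 1)
    (he₂ : e₂ = -1) :
    b ^ 2 = b * d₁ + d₂ + a * d₂ ∧
    c ^ 2 = b * d₁ + c * d₁ + d₂ ∧
    b * c = 2 * e₁ * b + 2 * e₂ + a * e₂ + e₁ * c ∧
    c * d₁ = d₁ * e₁ + c * e₁ + b * e₁ + e₂ ∧
    c * d₂ = d₂ * e₁ + b * e₂ ∧
    d₁ * e₁ + d₂ = e₁ ^ 2 ∧
    d₁ * e₁ + d₁ ^ 2 = e₁ ^ 2 + c * e₁ + d₁ * e₁ ∧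
    d₁ * e₁ = e₁ ^ 2 + d₁ * e₁ + e₂ ∧
    d₁ * e₂ + d₂ * c = e₁ * e₂ + b * e₂ + 2 * d₂ * e₁ ∧
    d₁ * e₂ = e₁ * e₂ + d₂ * e₁ ∧
    d₁ * e₂ + d₁ * d₂ = e₁ * e₂ + e₂ * c := by
  subst ha hb hc hd₁ hd₂ he₁ he₂
  exact g2ConsistencyEquations_of_ne_zero (hq ▸ RatFunc.X_ne_zero)
end

section
/- Let K be a field and let d₁ ∈ K satisfy 1 − d₁ ≠ 0. Define e₁ = 1, e₂ = −1, d₂ = 1 − d₁, c = d₁² − 1, b = d₁³ − d₁² − 2·d₁ + 2, and a = (b² − b·d₁ − d₂)/d₂. Then all eleven G₂ consistency equations hold: (1) b² = b·d₁ + d₂ + a·d₂; (2) c² = b·d₁ + c·d₁ + d₂; (3) b·c = 2·e₁·b + 2·e₂ + a·e₂ + e₁·c; (4) c·d₁ = d₁·e₁ + c·e₁ + b·e₁ + e₂; (5) c·d₂ = d₂·e₁ + b·e₂; (6) d₁·e₁ + d₂ = e₁²; (7) d₁·e₁ + d₁² = e₁² + c·e₁ + d₁·e₁; (8) d₁·e₁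 = e₁² + d₁·e₁ + e₂; (9) d₁·e₂ + d₂·c = e₁·e₂ + b·e₂ + 2·d₂·e₁; (10) d₁·e₂ = e₁·e₂ + d₂·e₁; (11) d₁·e₂ + d₁·d₂ = e₁·e₂ + e₂·c. -/
/-! With `d₂ = 1 - d₁`, the numerator `b² - b d₁ - d₂` defining `a` is divisible by `d₂`, with
quotient `(b - 1)(2 - c)`. So `a` is a polynomial in `d₁` too, and each of the eleven equations
becomes a polynomial identity in `d₁`. -/

theorem g2_numerator_eq_mul {R : Type*} [CommRing R] {d₁ b c : R}
    (hb : b = d₁ ^ 3 - d₁ ^ 2 - 2 * d₁ + 2) (hc : c = d₁ ^ 2 - 1) :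
    b ^ 2 - b * d₁ - (1 - d₁) = (b - 1) * (2 - c) * (1 - d₁) := by
  subst hb hc
  ring

theorem g2_coeff_a_eq {K : Type*} [Field K] {d₁ b c : K} (hd₁ : 1 - d₁ ≠ 0)
    (hb : b = d₁ ^ 3 - d₁ ^ 2 - 2 * d₁ + 2) (hc : c = d₁ ^ 2 - 1) :
    (b ^ 2 - b * d₁ - (1 - d₁)) / (1 - d₁) = (b - 1) * (2 - c) := by
  rw [div_eq_iff hd₁, g2_numerator_eq_mul hb hc]

/-- Over any field, once `d₁` is chosen with `1 - d₁ ≠ 0` and the remaining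
coefficients are defined from it, all eleven G₂ consistency equations hold. -/
theorem g2_one_parameter_family_satisfies_consistency
    (K : Type*) [Field K] (d₁ : K) (hd₁ : 1 - d₁ ≠ 0)
    (e₁ e₂ d₂ c b a : K)
    (he₁ : e₁ = 1)
    (he₂ : e₂ = -1)
    (hd₂ : d₂ = 1 - d₁)
    (hc : c = d₁ ^ 2 - 1)
    (hb : b = d₁ ^ 3 - d₁ ^ 2 - 2 * d₁ + 2)
    (ha : a = (b ^ 2 - b * d₁ - d₂) / d₂) :
    b ^ 2 = b * d₁ + d₂ + a * d₂ ∧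
    c ^ 2 = b * d₁ + c * d₁ + d₂ ∧
    b * c = 2 * e₁ * b + 2 * e₂ + a * e₂ + e₁ * c ∧
    c * d₁ = d₁ * e₁ + c * e₁ + b * e₁ + e₂ ∧
    c * d₂ = d₂ * e₁ + b * e₂ ∧
    d₁ * e₁ + d₂ = e₁ ^ 2 ∧
    d₁ * e₁ + d₁ ^ 2 = e₁ ^ 2 + c * e₁ + d₁ * e₁ ∧
    d₁ * e₁ = e₁ ^ 2 + d₁ * e₁ + e₂ ∧
    d₁ * e₂ + d₂ * c = e₁ * e₂ + b * e₂ + 2 * d₂ * e₁ ∧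
    d₁ * e₂ = e₁ * e₂ + d₂ * e₁ ∧
    d₁ * e₂ + d₁ * d₂ = e₁ * e₂ + e₂ * c := by
  rw [hd₂, g2_coeff_a_eq hd₁ hb hc] at ha
  subst he₁ he₂ hd₂ ha hc hb
  refine ⟨?_, ?_, ?_, ?_, ?_, ?_, ?_, ?_, ?_, ?_, ?_⟩ <;> ring
end

section
/- Let K be a field and let q ∈ K with q ≠ 0, (1 + q)² ≠ 0 and q² + q + 1 ≠ 0. Set d₂ = q + 1 + q⁻¹. Suppose f₁, f₂, g₁, g₂ ∈ K satisfy f₁·g₁·d₂ + f₂·g₂ = 1, f₂·g₂ = f₁·g₁, f₁²·d₂ − f₁·g₁ = f₂, and g₁²·d₂ − f₁·g₁ = g₂. Then f₁·g₁ = f₂·g₂ = 1/(q + 2 + q⁻¹) and f₁² + g₁² = (q + q⁻¹)/(q + 2 + q⁻¹). -/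
/-!
Write `p = f₁ g₁` and `d = d₂`. The first two equations give `p (d + 1) = 1`. Multiplying the
last two and using `f₂ g₂ = p` gives `p (p d² - d (f₁² + g₁²) + p - 1) = 0`; cancelling `p` and
substituting `p = 1 / (d + 1)` yields `f₁² + g₁² = (d - 1) / (d + 1)`, and `d - 1 = q + q⁻¹`.
-/

section CrossingCoefficients

variable {K : Type*} [Field K] {d f₁ f₂ g₁ g₂ : K}

theorem crossing_product_mul_eq_one (h1 : f₁ * g₁ * d + f₂ * g₂ = 1)
    (h2 : f₂ * g₂ = f₁ * g₁) : f₁ * g₁ * (d + 1) = 1 := by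
  linear_combination h1 - h2

theorem crossing_sq_add_sq_eq (hd : d ≠ 0) (hp : f₁ * g₁ * (d + 1) = 1)
    (h2 : f₂ * g₂ = f₁ * g₁) (h3 : f₁ ^ 2 * d - f₁ * g₁ = f₂)
    (h4 : g₁ ^ 2 * d - f₁ * g₁ = g₂) :
    f₁ ^ 2 + g₁ ^ 2 = (d - 1) / (d + 1) := by
  have hp0 : f₁ * g₁ ≠ 0 := left_ne_zero_of_mul_eq_one hp
  have hd1 : d + 1 ≠ 0 := right_ne_zero_of_mul_eq_one hp
  have hprod : f₁ * g₁ * (f₁ * g₁ * d ^ 2 - d * (f₁ ^ 2 + g₁ ^ 2) + f₁ * g₁ - 1) = 0 := by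
    rw [← h3, ← h4] at h2
    linear_combination h2
  have hlin : d * (f₁ ^ 2 + g₁ ^ 2) = f₁ * g₁ * (d ^ 2 + 1) - 1 := by
    linear_combination -((mul_eq_zero.mp hprod).resolve_left hp0)
  rw [eq_div_iff hd1]
  apply mul_left_cancel₀ hd
  linear_combination (d + 1) * hlin + (d ^ 2 + 1) * hp

end CrossingCoefficients

theorem add_one_add_inv_ne_zero {K : Type*} [Field K] {q : K} (hq0 : q ≠ 0)
    (hq : q ^ 2 + q + 1 ≠ 0) : q + 1 + q⁻¹ ≠ 0 := by
  have h : q + 1 + q⁻¹ = (q ^ 2 + q + 1) / q := by field_simp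
  rw [h]
  exact div_ne_zero hq hq0

theorem g2_crossing_coefficients_sum_and_product_general
    (K : Type*) [Field K] (q d₂ f₁ f₂ g₁ g₂ : K)
    (hq0 : q ≠ 0) (hq2 : q ^ 2 + q + 1 ≠ 0)
    (hd₂ : d₂ = q + 1 + q⁻¹)
    (h1 : f₁ * g₁ * d₂ + f₂ * g₂ = 1)
    (h2 : f₂ * g₂ = f₁ * g₁)
    (h3 : f₁ ^ 2 * d₂ - f₁ * g₁ = f₂)
    (h4 : g₁ ^ 2 * d₂ - f₁ * g₁ = g₂) :
    f₁ * g₁ = 1 / (q + 2 + q⁻¹) ∧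
    f₂ * g₂ = 1 / (q + 2 + q⁻¹) ∧
    f₁ ^ 2 + g₁ ^ 2 = (q + q⁻¹) / (q + 2 + q⁻¹) := by
  have hd : d₂ ≠ 0 := hd₂ ▸ add_one_add_inv_ne_zero hq0 hq2
  have hp := crossing_product_mul_eq_one h1 h2
  have hsum : q + 2 + q⁻¹ = d₂ + 1 := by rw [hd₂]; ring
  have hdiff : q + q⁻¹ = d₂ - 1 := by rw [hd₂]; ring
  have hprod : f₁ * g₁ = 1 / (q + 2 + q⁻¹) := hsum ▸ eq_one_div_of_mul_eq_one_left hp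
  refine ⟨hprod, h2.trans hprod, ?_⟩
  rw [hsum, hdiff]
  exact crossing_sq_add_sq_eq hd hp h2 h3 h4

/-- Over any field, the equations forced on the crossing coefficients
determine the product `f₁·g₁ = f₂·g₂` and the sum of squares `f₁² + g₁²`. -/
theorem g2_crossing_coefficients_sum_and_product
    (K : Type*) [Field K] (q d₂ f₁ f₂ g₁ g₂ : K)
    (hq0 : q ≠ 0) (hq1 : (1 + q) ^ 2 ≠ 0) (hq2 : q ^ 2 + q + 1 ≠ 0)
    (hd₂ : d₂ = q + 1 + q⁻¹)
    (h1 : f₁ * g₁ * d₂ + f₂ * g₂ = 1)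
    (h2 : f₂ * g₂ = f₁ * g₁)
    (h3 : f₁ ^ 2 * d₂ - f₁ * g₁ = f₂)
    (h4 : g₁ ^ 2 * d₂ - f₁ * g₁ = g₂) :
    f₁ * g₁ = 1 / (q + 2 + q⁻¹) ∧
    f₂ * g₂ = 1 / (q + 2 + q⁻¹) ∧
    f₁ ^ 2 + g₁ ^ 2 = (q + q⁻¹) / (q + 2 + q⁻¹) :=
  g2_crossing_coefficients_sum_and_product_general K q d₂ f₁ f₂ g₁ g₂ hq0 hq2 hd₂ h1 h2 h3 h4
end
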